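/- Let K be a field, m ≥ 1, and b₁, …, b_{2m} ∈ K pairwise distinct elements. Then the 2m × 2m matrix B with entries B_{pq} = Σ_{i=1}^{m} (b_p·b_q)^{2(i−1)}·(b_p − b_q) is invertible. (This is the key nondegeneracy computation, for odd genus g = 2m + 1, showing that the skew-symmetrized Massey product associated to the quadratic relation built from the polynomials Hᵢ = t^{2(i−1)} on a hyperelliptic curve is nondegenerate.) -/

import Mathlib

/-!
Writing `b_p^{2i+1} b_q^{2i} - b_p^{2i} b_q^{2i+1}` for the `i`-th summand shows
`B = V J Vᵀ`, where `V` is the Vandermonde matrix of `b` and `J` is the standard symplectic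
matrix, placed on the exponents so that `2i` pairs with `2i + 1`. Both factors are invertible:
`V` because the `b_p` are distinct, `J` because `det J ^ 2 = 1`.
-/

open Matrix

def finSumFinInterleave (m : ℕ) : Fin m ⊕ Fin m ≃ Fin (2 * m) :=
  (Equiv.boolProdEquivSum (Fin m)).symm.trans <| (Equiv.prodComm _ _).trans <|
    (Equiv.prodCongr (Equiv.refl _) finTwoEquiv.symm).trans <|
      finProdFinEquiv.trans (finCongr (Nat.mul_comm m 2))

@[simp]
theorem finSumFinInterleave_inl_val {m : ℕ} (i : Fin m) :
    (finSumFinInterleave m (.inl i) : ℕ) = 2 * i := by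
  simp [finSumFinInterleave, finTwoEquiv]

@[simp]
theorem finSumFinInterleave_inr_val {m : ℕ} (i : Fin m) :
    (finSumFinInterleave m (.inr i) : ℕ) = 2 * i + 1 := by
  simp [finSumFinInterleave, finTwoEquiv]
  ring

namespace Matrix

variable {l m n R : Type*} [Fintype l] [DecidableEq l] [Fintype n] [CommRing R]

theorem mul_reindex_J_mul_transpose_apply (V : Matrix m n R) (e : l ⊕ l ≃ n) (p q : m) :
    (V * reindex e e (J l R) * Vᵀ) p q =
      ∑ i, (V p (e (.inr i)) * V q (e (.inl i)) - V p (e (.inl i)) * V q (e (.inr i))) := by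
  simp only [mul_apply, reindex_apply, submatrix_apply, transpose_apply, J, fromBlocks,
    Equiv.symm_apply_apply, of_apply, ← e.sum_comp, Fintype.sum_sum_type, Sum.elim_inl,
    Sum.elim_inr, zero_apply, mul_zero, Finset.sum_const_zero, one_apply, mul_ite, mul_one,
    Finset.sum_ite_eq', Finset.mem_univ, ↓reduceIte, zero_add, neg_apply, mul_neg, neg_mul,
    Finset.sum_neg_distrib, add_zero, Finset.sum_sub_distrib]
  ring

theorem isUnit_reindex_J [DecidableEq n] (e : l ⊕ l ≃ n) : IsUnit (reindex e e (J l R)) := by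
  rw [isUnit_iff_isUnit_det, det_reindex_self]
  exact isUnit_det_J l R

end Matrix

theorem stmt_14 {K : Type*} [Field K] (m : ℕ)
    (b : Fin (2 * m) → K) (hb : Function.Injective b)
    (B : Matrix (Fin (2 * m)) (Fin (2 * m)) K)
    (hB : ∀ p q, B p q = ∑ i ∈ Finset.range m, (b p * b q) ^ (2 * i) * (b p - b q)) :
    IsUnit B := by
  let e := finSumFinInterleave m
  have hBJ : B = vandermonde b * reindex e e (J (Fin m) K) * (vandermonde b)ᵀ := by
    ext p q
    rw [hB, mul_reindex_J_mul_transpose_apply, ← Fin.sum_univ_eq_sum_range]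
    refine Finset.sum_congr rfl fun i _ => ?_
    simp only [vandermonde_apply, e, finSumFinInterleave_inl_val, finSumFinInterleave_inr_val]
    ring
  have hV : IsUnit (vandermonde b) :=
    (isUnit_iff_isUnit_det _).2 (det_vandermonde_ne_zero_iff.2 hb).isUnit
  rw [hBJ]
  exact (hV.mul (isUnit_reindex_J e)).mul ((isUnit_transpose _).2 hV)
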